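/- arXiv:2303.05381 — 3 statements merged into one kernel-verified Lean document; each statement's English description precedes it below -/
import Mathlib

section
/- Let G be a group, σ an automorphism of G, and S a subset of G. The twisted Cayley graph C(G,S)^σ is undirected (i.e., whenever there is an edge from x to y there is an edge from y to x) if and only if σ(s^{-1}g^{-1})·σ^{-1}(g) ∈ S for every s ∈ S and g ∈ G. -/
/-! Game of cops and robbers on a (possibly directed, loops-allowed) graph given by an
adjacency relation `A` on a vertex type `V`.

A single move (of a cop or of the robber) consists of staying put or moving to an
adjacent vertex.  A strategy for `k` cops is a function `CS` from the full history of
robber positions to the positions of the `k` cops: `CS []` is the initial placement of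
the cops (chosen before the robber places itself), and `CS [r₀, …, rₙ]` is the cops'
position after their `(n+1)`-st turn, having seen the robber at `r₀, …, rₙ` (the robber
at position `rₙ` after its `(n+1)`-st turn).  Since the cops' positions are completely
determined by the sequence of robber positions, quantifying over all legal sequences of
robber positions captures every robber strategy with full information.  The cops win if
at some moment (after a cop turn or after a robber turn) some cop occupies the robber's
vertex. -/

section CopsAndRobbers

variable {V : Type*}

/-- A legal single move: stay put or move along an edge. -/
def MoveStep (A : V → V → Prop) (u v : V) : Prop := u = v ∨ A u v

/-- Positions of the cops after their `n`-th turn, given the cop strategy `CS` and the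
sequence `r` of robber positions (`r m` is the robber's position after its `m`-th turn,
`r 0` being its initial placement). -/
def copPos {k : ℕ} (CS : List V → Fin k → V) (r : ℕ → V) (n : ℕ) : Fin k → V :=
  CS (List.ofFn fun j : Fin n => r j.1)

/-- `k` cops have a winning strategy on the graph with adjacency relation `A`. -/
def CopsWin (A : V → V → Prop) (k : ℕ) : Prop :=
  ∃ CS : List V → Fin k → V,
    (∀ (l : List V) (v : V) (i : Fin k), MoveStep A (CS l i) (CS (l ++ [v]) i)) ∧
    ∀ r : ℕ → V, (∀ n, MoveStep A (r n) (r (n + 1))) →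
      ∃ n, ∃ i : Fin k, copPos CS r n i = r n ∨ copPos CS r (n + 1) i = r n

/-- The cop number: the least number of cops possessing a winning strategy. -/
noncomputable def copNumber (A : V → V → Prop) : ℕ := sInf {k | CopsWin A k}

/-- The graph is undirected: the adjacency relation is symmetric. -/
def IsUndirected (A : V → V → Prop) : Prop := ∀ u v, A u v → A v u

/-- The graph is connected: any two vertices are joined by a path following edges in
either direction. -/
def IsConn (A : V → V → Prop) : Prop :=
  ∀ u v : V, Relation.ReflTransGen (fun a b => A a b ∨ A b a) u v

end CopsAndRobbers

/-- The Cayley graph `C(G,S)`: edge from `u` to `v` iff `v = u * s` for some `s ∈ S`. -/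
def cayleyAdj {G : Type*} [Group G] (S : Set G) (u v : G) : Prop :=
  ∃ s ∈ S, v = u * s

/-- The Cayley sum graph `C_Σ(G,S)`: edge from `u` to `v` iff `v = u⁻¹ * s` for some
`s ∈ S`. -/
def cayleySumAdj {G : Type*} [Group G] (S : Set G) (u v : G) : Prop :=
  ∃ s ∈ S, v = u⁻¹ * s

/-- The twisted Cayley graph `C(G,S)^σ`: edge from `x` to `y` iff `y = σ (x * s)` for
some `s ∈ S`. -/
def twistedCayleyAdj {G : Type*} [Group G] (σ : G ≃* G) (S : Set G) (x y : G) : Prop :=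
  ∃ s ∈ S, y = σ (x * s)

/-- The twisted Cayley sum graph `C_Σ(G,S)^σ`: edge from `x` to `y` iff
`y = σ (x⁻¹ * s)` for some `s ∈ S`. -/
def twistedCayleySumAdj {G : Type*} [Group G] (σ : G ≃* G) (S : Set G) (x y : G) : Prop :=
  ∃ s ∈ S, y = σ (x⁻¹ * s)

/- An edge `x → y` exists iff `x⁻¹ σ⁻¹(y) ∈ S`, so undirectedness says that this membership is
symmetric in `x` and `y`.  The edges leaving `g` are `g → σ (g s)` with `s ∈ S`, and reversing
such an edge asks for `σ (g s)⁻¹ σ⁻¹(g) = σ (s⁻¹ g⁻¹) σ⁻¹(g)` to lie in `S`. -/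

theorem twistedCayleyAdj_iff {G : Type*} [Group G] (σ : G ≃* G) (S : Set G) (x y : G) :
    twistedCayleyAdj σ S x y ↔ x⁻¹ * σ.symm y ∈ S := by
  constructor
  · rintro ⟨s, hs, rfl⟩
    simpa using hs
  · intro h
    exact ⟨_, h, by simp⟩

/-- the twisted Cayley graph `C(G,S)^σ` is undirected if and only if
`σ(s⁻¹ g⁻¹) · σ⁻¹(g) ∈ S` for every `s ∈ S` and `g ∈ G`. -/
theorem twistedCayley_undirected_iff {G : Type*} [Group G] (σ : G ≃* G) (S : Set G) :
    IsUndirected (twistedCayleyAdj σ S) ↔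
      ∀ s ∈ S, ∀ g : G, σ (s⁻¹ * g⁻¹) * σ.symm g ∈ S := by
  simp only [IsUndirected, twistedCayleyAdj_iff]
  constructor
  · intro h s hs g
    simpa using h g (σ (g * s)) (by simpa using hs)
  · intro h x y hxy
    simpa using h _ hxy x
end

section
/- Let G be a group, σ an automorphism of G, and S a subset of G. The twisted Cayley sum graph C_Σ(G,S)^σ is undirected (i.e., whenever there is an edge from x to y there is an edge from y to x) if and only if σ²(g)·σ(s)·g^{-1} ∈ S for every s ∈ S and g ∈ G. -/
theorem twistedCayleySumAdj_iff_mul_symm_mem {G : Type*} [Group G] (σ : G ≃* G) (S : Set G)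
    (x y : G) : twistedCayleySumAdj σ S x y ↔ x * σ.symm y ∈ S :=
  ⟨fun ⟨s, hs, hy⟩ => by simpa [hy] using hs, fun h => ⟨_, h, by simp⟩⟩

/-- the twisted Cayley sum graph `C_Σ(G,S)^σ` is undirected if and only if
`σ²(g) · σ(s) · g⁻¹ ∈ S` for every `s ∈ S` and `g ∈ G`. -/
theorem twistedCayleySum_undirected_iff {G : Type*} [Group G] (σ : G ≃* G) (S : Set G) :
    IsUndirected (twistedCayleySumAdj σ S) ↔
      ∀ s ∈ S, ∀ g : G, σ (σ g) * σ s * g⁻¹ ∈ S := by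
  simp only [IsUndirected, twistedCayleySumAdj_iff_mul_symm_mem]
  -- If `x → y` has label `s = x σ⁻¹(y)`, then `y σ⁻¹(x) = σ²(g) σ(s) g⁻¹` for `g = σ⁻¹(x)⁻¹`.
  constructor
  · intro h s hs g
    simpa [mul_assoc] using h (σ g⁻¹) (σ (σ g * s)) (by simpa using hs)
  · intro h x y hxy
    simpa [mul_assoc] using h _ hxy (σ.symm x)⁻¹
end

section
/- Let G be a finite group and S a symmetric subset of G, closed under conjugation by the elements of G, that generates G. Then every element of G can be expressed as a product of at most |G|/2 elements of S (the identity being the empty product); that is, for every x ∈ G there exist m ≤ |G|/2 and s_1, …, s_m ∈ S with x = s_1 s_2 ⋯ s_m. -/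
section aux
variable {G : Type*} [Group G]

/-- Conjugating a product of elements of a conjugation-closed set. -/
lemma conj_rep (S : Set G) (hconj : ∀ (g : G), ∀ s ∈ S, g * s * g⁻¹ ∈ S)
    (g : G) (l : List G) (hl : ∀ s ∈ l, s ∈ S) :
    ∃ l' : List G, l'.length = l.length ∧ (∀ s ∈ l', s ∈ S) ∧
      l'.prod = g * l.prod * g⁻¹ := by
  refine ⟨l.map (fun s => g * s * g⁻¹), by simp, ?_, ?_⟩
  · intro s hs
    rcases List.mem_map.1 hs with ⟨t, ht, rfl⟩
    exact hconj g t (hl t ht)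
  · have h := map_list_prod (MulAut.conj g).toMonoidHom l
    rw [show (fun s => g * s * g⁻¹) = ⇑(MulAut.conj g) from funext fun s => (MulAut.conj_apply g s).symm]
    simpa using h.symm

/-- Inverting a product of elements of a symmetric set. -/
lemma inv_rep (S : Set G) (hS : S⁻¹ = S)
    (l : List G) (hl : ∀ s ∈ l, s ∈ S) :
    ∃ l' : List G, l'.length = l.length ∧ (∀ s ∈ l', s ∈ S) ∧
      l'.prod = l.prod⁻¹ := by
  refine ⟨(l.map fun x => x⁻¹).reverse, by simp, ?_, (List.prod_inv_reverse l).symm⟩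
  intro s hs
  rcases List.mem_map.1 (List.mem_reverse.1 hs) with ⟨t, ht, rfl⟩
  rw [← hS]
  simpa using hl t ht
end aux

/-- if `S` is a symmetric, conjugation-closed generating subset of a
finite group `G`, then every element of `G` is a product of at most `|G|/2` elements of
`S` (stated as `2 m ≤ |G|`, the identity being the empty product). -/

theorem exists_short_product {G : Type*} [Group G] [Fintype G] (S : Set G)
    (hS : S⁻¹ = S)
    (hconj : ∀ (g : G), ∀ s ∈ S, g * s * g⁻¹ ∈ S)
    (hgen : Subgroup.closure S = ⊤) :
    ∀ x : G, ∃ (m : ℕ) (f : Fin m → G), 2 * m ≤ Fintype.card G ∧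
      (∀ i, f i ∈ S) ∧ x = (List.ofFn f).prod := by
  classical
  intro x
  -- every element is a product of elements of S
  have hex : ∃ n, ∃ l : List G, l.length = n ∧ (∀ s ∈ l, s ∈ S) ∧ x = l.prod := by
    have hx : x ∈ Submonoid.closure S := by
      have h1 : (Subgroup.closure S).toSubmonoid = Submonoid.closure (S ∪ S⁻¹) :=
        Subgroup.closure_toSubmonoid S
    
      rw [hS, Set.union_self] at h1
      rw [← h1, hgen]
      trivial
    obtain ⟨l, hl1, hl2⟩ := Submonoid.exists_list_of_mem_closure hx
    exact ⟨l.length, l, rfl, hl1, hl2.symm⟩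
  obtain ⟨l, hlen, hmem, hprod⟩ := Nat.find_spec hex
  -- minimality
  have hmin : ∀ lq : List G, (∀ s ∈ lq, s ∈ S) → x = lq.prod → l.length ≤ lq.length := by
    intro lq h1 h2
    by_contra hc
    push_neg at hc
    rw [hlen] at hc
    exact Nat.find_min hex hc ⟨lq, rfl, h1, h2⟩
  set m := l.length with hm
  refine ⟨m, fun i => l.get i, ?_, fun i => hmem _ (l.get_mem i), by
    rw [List.ofFn_get]; exact hprod⟩
  -- key: x (or x⁻¹) cannot be a conjugate of a product of fewer than m elements of S
  have key : ∀ (a : G) (q : List G), (∀ s ∈ q, s ∈ S) → q.length < m →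
      x ≠ a * q.prod * a⁻¹ := by
    intro a q hq hlt heq
    obtain ⟨l', h1, h2, h3⟩ := conj_rep S hconj a q hq
    have := hmin l' h2 (by rw [h3, ← heq])
    omega
  have keyinv : ∀ (a : G) (q : List G), (∀ s ∈ q, s ∈ S) → q.length < m →
      x⁻¹ ≠ a * q.prod * a⁻¹ := by
    intro a q hq hlt heq
    obtain ⟨l', h1, h2, h3⟩ := conj_rep S hconj a q hq
    obtain ⟨l'', g1, g2, g3⟩ := inv_rep S hS l' h2
    have := hmin l'' g2 (by rw [g3, h3, ← heq, inv_inv])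
    omega
  -- distinct prefixes
  have pre_ne : ∀ i j : Fin m, (i : ℕ) < j → (l.take i).prod ≠ (l.take j).prod := by
    intro i j hij heq
    have hxeq : x = ((l.take i) ++ (l.drop j)).prod := by
      rw [List.prod_append]
      calc x = l.prod := hprod
        _ = ((l.take j) ++ (l.drop j)).prod := by rw [List.take_append_drop]
        _ = (l.take j).prod * (l.drop j).prod := List.prod_append
        _ = (l.take i).prod * (l.drop j).prod := by rw [heq]
      
    have hmem' : ∀ s ∈ (l.take i) ++ (l.drop j), s ∈ S := by
      intro s hs
      rcases List.mem_append.1 hs with h | h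
      · exact hmem s (List.take_subset _ _ h)
      · exact hmem s (List.drop_subset _ _ h)
    have := hmin _ hmem' hxeq
    have hi : (i : ℕ) < m := i.isLt
    have hj : (j : ℕ) < m := j.isLt
    have hlen' : ((l.take i) ++ (l.drop j)).length = i + (m - j) := by
      rw [List.length_append, List.length_take, List.length_drop]
      omega
    omega
  -- x * prefix ≠ prefix
  have mix_ne : ∀ i j : Fin m, (l.take i).prod ≠ x * (l.take j).prod := by
    intro i j heq
    rcases lt_or_ge (j : ℕ) (i : ℕ) with hji | hij
    · -- x = p_j * q * p_j⁻¹ with q = drop j (take i l)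
      set q := (l.take i).drop j with hq
      have hsplit : l.take i = l.take j ++ q := by
        rw [hq]
        conv_lhs => rw [← List.take_append_drop (j : ℕ) (l.take i)]
        congr 1
        rw [List.take_take]
        congr 1
        omega
      have hqmem : ∀ s ∈ q, s ∈ S := fun s hs =>
        hmem s (List.take_subset _ _ (List.drop_subset _ _ hs))
      have hqlen : q.length < m := by
        have hi := i.isLt
        have h1 : (l.take i).length = i := by
          rw [List.length_take]; omega
        have : q.length = i - j := by
          rw [hq, List.length_drop, h1]
        omega
      refine key ((l.take j).prod) q hqmem hqlen ?_
      have : x = (l.take i).prod * ((l.take j).prod)⁻¹ := by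
        rw [heq]; group
      rw [this, hsplit, List.prod_append]
    · -- i ≤ j : x⁻¹ = p_i * q * p_i⁻¹ with q = drop i (take j l)
      set q := (l.take j).drop i with hq
      have hsplit : l.take j = l.take i ++ q := by
        rw [hq]
        conv_lhs => rw [← List.take_append_drop (i : ℕ) (l.take j)]
        congr 1
        rw [List.take_take]
        congr 1
        omega
      have hqmem : ∀ s ∈ q, s ∈ S := fun s hs =>
        hmem s (List.take_subset _ _ (List.drop_subset _ _ hs))
      have hqlen : q.length < m := by
        have hj := j.isLt
        have h1 : (l.take j).length = j := by
          rw [List.length_take]; omega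
        have : q.length = j - i := by
          rw [hq, List.length_drop, h1]
        omega
      refine keyinv ((l.take i).prod) q hqmem hqlen ?_
      have : x⁻¹ = (l.take j).prod * ((l.take i).prod)⁻¹ := by
        rw [heq]; group
      rw [this, hsplit, List.prod_append]
  -- the injection
  have hinj : Function.Injective
      (Sum.elim (fun i : Fin m => (l.take i).prod)
                (fun i : Fin m => x * (l.take i).prod)) := by
    intro a b hab
    rcases a with i | i <;> rcases b with j | j <;> simp only [Sum.elim_inl, Sum.elim_inr] at hab
    · rcases lt_trichotomy (i : ℕ) (j : ℕ) with h | h | h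
      · exact absurd hab (pre_ne i j h)
      · exact congrArg Sum.inl (Fin.ext h)
      · exact absurd hab.symm (pre_ne j i h)
    · exact absurd hab (mix_ne i j)
    · exact absurd hab.symm (mix_ne j i)
    · have : (l.take i).prod = (l.take j).prod := by
        exact mul_left_cancel hab
      rcases lt_trichotomy (i : ℕ) (j : ℕ) with h | h | h
      · exact absurd this (pre_ne i j h)
      · exact congrArg Sum.inr (Fin.ext h)
      · exact absurd this.symm (pre_ne j i h)
  have := Fintype.card_le_of_injective _ hinj
  simpa [two_mul] using this
end
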